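/- The map Ψ sending (S, A, B) to the block matrix [[S, A],[Aᵀ, 4B]] is a Lie algebra isomorphism from the Lie algebra (Sym(2K) ⋉ ℝ^{2K}) ⊕ ℝ with bracket [(S,A,B),(S',A',B')] = (S N̄ S' − S' N̄ S, S N̄ A' − S' N̄ A, (1/4)(Aᵀ N̄ A' − A'ᵀ N̄ A)) onto Sym(2K+1) with the Bloch-Iserles bracket [X,Y]_N = X N Y − Y N X, where N is the block matrix [[N̄, 0],[0, 0]]. -/

import Mathlib

/-!
`Ψ(S, A, B)` is the block matrix `[[S, A], [Aᵀ, 4B]]`, so linearity, symmetry and bijectivity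
onto `Sym(2K+1)` are blockwise statements. Since `N` vanishes outside its `N̄` block,
`Ψ N Ψ' = [[S N̄ S', S N̄ A'], [Aᵀ N̄ S', Aᵀ N̄ A']]`; the upper blocks of the bracket are then
the first two components of the bracket of triples, and the antisymmetry of `N̄` together with
the symmetry of `S, S'` turns the lower-left block into the transpose `(S N̄ A' − S' N̄ A)ᵀ`.
-/

open Matrix

def PsiBI {K : ℕ} (S : Matrix (Fin (2 * K)) (Fin (2 * K)) ℝ)
    (A : Fin (2 * K) → ℝ) (B : ℝ) :
    Matrix (Fin (2 * K) ⊕ Fin 1) (Fin (2 * K) ⊕ Fin 1) ℝ :=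
  Matrix.fromBlocks S (fun i _ => A i) (fun _ j => A j) (fun _ _ => 4 * B)

def bigN {K : ℕ} (Nbar : Matrix (Fin (2 * K)) (Fin (2 * K)) ℝ) :
    Matrix (Fin (2 * K) ⊕ Fin 1) (Fin (2 * K) ⊕ Fin 1) ℝ :=
  Matrix.fromBlocks Nbar 0 0 0

namespace Matrix

variable {l m m' n o p q r α : Type*}

theorem fromBlocks_sub [Sub α] (A : Matrix n l α) (B : Matrix n m α) (C : Matrix o l α)
    (D : Matrix o m α) (A' : Matrix n l α) (B' : Matrix n m α) (C' : Matrix o l α)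
    (D' : Matrix o m α) : fromBlocks A B C D - fromBlocks A' B' C' D' =
      fromBlocks (A - A') (B - B') (C - C') (D - D') := by
  ext (i | i) (j | j) <;> rfl

theorem replicateCol_sub [Sub α] {ι : Type*} (v w : m → α) :
    replicateCol ι (v - w) = replicateCol ι v - replicateCol ι w :=
  rfl

theorem replicateRow_sub [Sub α] {ι : Type*} (v w : m → α) :
    replicateRow ι (v - w) = replicateRow ι v - replicateRow ι w :=
  rfl

theorem fromBlocks_mul_fromBlocks_zero_mul [Fintype l] [Fintype m] [Fintype p] [Fintype m']
    [NonUnitalNonAssocSemiring α]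
    (A : Matrix n l α) (B : Matrix n m α) (C : Matrix o l α) (D : Matrix o m α) (N : Matrix l p α)
    (A' : Matrix p q α) (B' : Matrix p r α) (C' : Matrix m' q α) (D' : Matrix m' r α) :
    fromBlocks A B C D * fromBlocks N 0 0 (0 : Matrix m m' α) * fromBlocks A' B' C' D' =
      fromBlocks (A * N * A') (A * N * B') (C * N * A') (C * N * B') := by
  simp [fromBlocks_multiply]

theorem IsSymm.replicateRow_mul_mulVec [Fintype n] [CommRing α] {ι : Type*}
    {S N : Matrix n n α} (hS : S.IsSymm) (hN : Nᵀ = -N) (v : n → α) :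
    replicateRow ι ((S * N) *ᵥ v) = -(replicateRow ι v * N * S) := by
  rw [replicateRow_mulVec, transpose_mul, transpose_mul, transpose_replicateCol, hS.eq, hN,
    Matrix.neg_mul, Matrix.mul_neg, Matrix.mul_assoc]

end Matrix

section PsiBI

variable {K : ℕ}

theorem PsiBI_eq_fromBlocks (S : Matrix (Fin (2 * K)) (Fin (2 * K)) ℝ) (A : Fin (2 * K) → ℝ)
    (B : ℝ) :
    PsiBI S A B =
      fromBlocks S (replicateCol (Fin 1) A) (replicateRow (Fin 1) A) (of fun _ _ => 4 * B) :=
  rfl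

theorem PsiBI_add (S S' : Matrix (Fin (2 * K)) (Fin (2 * K)) ℝ) (A A' : Fin (2 * K) → ℝ)
    (B B' : ℝ) : PsiBI (S + S') (A + A') (B + B') = PsiBI S A B + PsiBI S' A' B' := by
  simp only [PsiBI_eq_fromBlocks, fromBlocks_add, replicateCol_add, replicateRow_add]
  congr 1
  ext; simp [mul_add]

theorem PsiBI_smul (c : ℝ) (S : Matrix (Fin (2 * K)) (Fin (2 * K)) ℝ) (A : Fin (2 * K) → ℝ)
    (B : ℝ) : PsiBI (c • S) (c • A) (c * B) = c • PsiBI S A B := by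
  simp only [PsiBI_eq_fromBlocks, fromBlocks_smul, replicateCol_smul, replicateRow_smul]
  congr 1
  ext; simp [mul_left_comm]

theorem transpose_PsiBI {S : Matrix (Fin (2 * K)) (Fin (2 * K)) ℝ} (hS : Sᵀ = S)
    (A : Fin (2 * K) → ℝ) (B : ℝ) : (PsiBI S A B)ᵀ = PsiBI S A B := by
  rw [PsiBI_eq_fromBlocks, fromBlocks_transpose, hS, transpose_replicateCol,
    transpose_replicateRow]
  rfl

theorem PsiBI_inj {S S' : Matrix (Fin (2 * K)) (Fin (2 * K)) ℝ} {A A' : Fin (2 * K) → ℝ}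
    {B B' : ℝ} : PsiBI S A B = PsiBI S' A' B' ↔ S = S' ∧ A = A' ∧ B = B' := by
  refine ⟨fun h => ?_, fun ⟨rfl, rfl, rfl⟩ => rfl⟩
  obtain ⟨hS, hA, -, hB⟩ := fromBlocks_inj.mp h
  refine ⟨hS, replicateCol_inj.mp hA, ?_⟩
  simpa using congrFun₂ hB 0 0

theorem exists_PsiBI_eq_of_transpose_eq
    {M : Matrix (Fin (2 * K) ⊕ Fin 1) (Fin (2 * K) ⊕ Fin 1) ℝ} (hM : Mᵀ = M) :
    ∃ S A B, Sᵀ = S ∧ PsiBI S A B = M := by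
  refine ⟨M.toBlocks₁₁, fun i => M (.inl i) (.inr 0), M (.inr 0) (.inr 0) / 4, ?_, ?_⟩
  · ext i j
    exact congrFun₂ hM (.inl i) (.inl j)
  · conv_rhs => rw [← fromBlocks_toBlocks M]
    rw [PsiBI_eq_fromBlocks, fromBlocks_inj]
    refine ⟨rfl, ?_, ?_, ?_⟩ <;> ext i j
    · simp [toBlocks₁₂, Subsingleton.elim j 0]
    · simpa [toBlocks₂₁, Subsingleton.elim i 0] using congrFun₂ hM (.inr 0) (.inl j)
    · simp [toBlocks₂₂, Subsingleton.elim i 0, Subsingleton.elim j 0, mul_div_cancel₀]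

theorem PsiBI_bracket {Nbar S S' : Matrix (Fin (2 * K)) (Fin (2 * K)) ℝ} (hN : Nbarᵀ = -Nbar)
    (hS : Sᵀ = S) (hS' : S'ᵀ = S') (A A' : Fin (2 * K) → ℝ) (B B' : ℝ) :
    PsiBI (S * Nbar * S' - S' * Nbar * S)
        ((S * Nbar) *ᵥ A' - (S' * Nbar) *ᵥ A)
        ((1 / 4) * (A ⬝ᵥ Nbar *ᵥ A' - A' ⬝ᵥ Nbar *ᵥ A)) =
      PsiBI S A B * bigN Nbar * PsiBI S' A' B' - PsiBI S' A' B' * bigN Nbar * PsiBI S A B := by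
  rw [PsiBI_eq_fromBlocks, PsiBI_eq_fromBlocks, PsiBI_eq_fromBlocks, bigN,
    fromBlocks_mul_fromBlocks_zero_mul, fromBlocks_mul_fromBlocks_zero_mul, fromBlocks_sub,
    fromBlocks_inj]
  refine ⟨rfl, ?_, ?_, ?_⟩
  · rw [replicateCol_sub, replicateCol_mulVec, replicateCol_mulVec]
  · rw [replicateRow_sub, IsSymm.replicateRow_mul_mulVec hS hN,
      IsSymm.replicateRow_mul_mulVec hS' hN, neg_sub_neg]
  · rw [Matrix.mul_assoc, Matrix.mul_assoc, ← replicateCol_mulVec Nbar A',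
      ← replicateCol_mulVec Nbar A, replicateRow_mul_replicateCol, replicateRow_mul_replicateCol]
    ext
    simp only [of_apply, Matrix.sub_apply]
    ring

end PsiBI

/-- `Ψ` is a Lie algebra isomorphism from `(Sym(2K) ⋉ ℝ^{2K}) ⊕ ℝ` with the
bracket `[(S,A,B),(S',A',B')] = (S N̄ S' − S' N̄ S, S N̄ A' − S' N̄ A,
(1/4)(Aᵀ N̄ A' − A'ᵀ N̄ A))` onto `Sym(2K+1)` with the Bloch–Iserles bracket. -/
theorem Psi_lie_algebra_isomorphism {K : ℕ}
    (Nbar : Matrix (Fin (2 * K)) (Fin (2 * K)) ℝ) (hN : Nbarᵀ = -Nbar) :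
    -- linearity
    (∀ (S S' : Matrix (Fin (2 * K)) (Fin (2 * K)) ℝ) (A A' : Fin (2 * K) → ℝ) (B B' : ℝ),
        PsiBI (S + S') (A + A') (B + B') = PsiBI S A B + PsiBI S' A' B') ∧
    (∀ (c : ℝ) (S : Matrix (Fin (2 * K)) (Fin (2 * K)) ℝ) (A : Fin (2 * K) → ℝ) (B : ℝ),
        PsiBI (c • S) (c • A) (c * B) = c • PsiBI S A B) ∧
    -- Ψ maps symmetric triples to symmetric matrices
    (∀ (S : Matrix (Fin (2 * K)) (Fin (2 * K)) ℝ) (A : Fin (2 * K) → ℝ) (B : ℝ),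
        Sᵀ = S → (PsiBI S A B)ᵀ = PsiBI S A B) ∧
    -- injectivity
    (∀ (S S' : Matrix (Fin (2 * K)) (Fin (2 * K)) ℝ) (A A' : Fin (2 * K) → ℝ) (B B' : ℝ),
        PsiBI S A B = PsiBI S' A' B' → S = S' ∧ A = A' ∧ B = B') ∧
    -- surjectivity onto Sym(2K+1)
    (∀ M : Matrix (Fin (2 * K) ⊕ Fin 1) (Fin (2 * K) ⊕ Fin 1) ℝ, Mᵀ = M →
        ∃ (S : Matrix (Fin (2 * K)) (Fin (2 * K)) ℝ) (A : Fin (2 * K) → ℝ) (B : ℝ),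
          Sᵀ = S ∧ PsiBI S A B = M) ∧
    -- bracket preservation
    (∀ (S S' : Matrix (Fin (2 * K)) (Fin (2 * K)) ℝ) (A A' : Fin (2 * K) → ℝ) (B B' : ℝ),
        Sᵀ = S → S'ᵀ = S' →
        PsiBI (S * Nbar * S' - S' * Nbar * S)
          ((S * Nbar).mulVec A' - (S' * Nbar).mulVec A)
          ((1 / 4) * (A ⬝ᵥ Nbar.mulVec A' - A' ⬝ᵥ Nbar.mulVec A))
        = PsiBI S A B * bigN Nbar * PsiBI S' A' B'
          - PsiBI S' A' B' * bigN Nbar * PsiBI S A B) :=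
  ⟨PsiBI_add, PsiBI_smul, fun _ _ _ hS => transpose_PsiBI hS _ _,
    fun _ _ _ _ _ _ h => PsiBI_inj.mp h, fun _ hM => exists_PsiBI_eq_of_transpose_eq hM,
    fun _ _ A A' B B' hS hS' => PsiBI_bracket hN hS hS' A A' B B'⟩
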